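/- In the original (top-level reset) semantics of λS, Ω ≃_p Sk.Ω: the diverging term Ω is contextually equivalent to the stuck term Sk.Ω, i.e., for every closing context C, ⟨C[Ω]⟩ evaluates to a value iff ⟨C[Sk.Ω]⟩ does (and in fact neither ever does). -/

import Mathlib

/-- Terms of the calculus λS: variables, abstractions, applications,
    shift (Sk.t) and reset (⟨t⟩). -/
inductive Tm : Type
  | var : ℕ → Tm
  | lam : ℕ → Tm → Tm
  | app : Tm → Tm → Tm
  | shift : ℕ → Tm → Tm
  | reset : Tm → Tm
deriving DecidableEq

namespace Tm

/-- Values are λ-abstractions. -/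
def IsValue : Tm → Prop
  | lam _ _ => True
  | _ => False

/-- Free variables. -/
def fv : Tm → Finset ℕ
  | var x => {x}
  | lam x t => fv t \ {x}
  | app a b => fv a ∪ fv b
  | shift k t => fv t \ {k}
  | reset t => fv t

def Closed (t : Tm) : Prop := fv t = ∅

/-- Substitution t{v/x} (substituted terms are closed values, so no
    capture can occur). -/
def subst : Tm → ℕ → Tm → Tm
  | var y, x, v => if y = x then v else var y
  | lam y t, x, v => if y = x then lam y t else lam y (subst t x v)
  | app a b, x, v => app (subst a x v) (subst b x v)
  | shift k t, x, v => if k = x then shift k t else shift k (subst t x v)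
  | reset t, x, v => reset (subst t x v)

end Tm

/-- (Evaluation) contexts F ::= [] | v F | F t | ⟨F⟩, represented outside-in.
    Pure contexts E are those with no reset constructor. -/
inductive Ctx : Type
  | hole : Ctx
  | appR : Tm → Ctx → Ctx   -- v F
  | appL : Ctx → Tm → Ctx   -- F t
  | reset : Ctx → Ctx       -- ⟨F⟩
deriving DecidableEq

namespace Ctx

def plug : Ctx → Tm → Tm
  | hole, t => t
  | appR v F, t => Tm.app v (F.plug t)
  | appL F u, t => Tm.app (F.plug t) u
  | reset F, t => Tm.reset (F.plug t)

/-- Well-formedness: in `v F` the term v must be a value. -/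
def Wf : Ctx → Prop
  | hole => True
  | appR v F => v.IsValue ∧ F.Wf
  | appL F _ => F.Wf
  | reset F => F.Wf

/-- Pure contexts contain no reset around the hole. -/
def Pure : Ctx → Prop
  | hole => True
  | appR _ F => F.Pure
  | appL F _ => F.Pure
  | reset _ => False

def fv : Ctx → Finset ℕ
  | hole => ∅
  | appR v F => v.fv ∪ F.fv
  | appL F u => F.fv ∪ u.fv
  | reset F => F.fv

/-- Context composition: (F.comp G)[t] = F[G[t]]. -/
def comp : Ctx → Ctx → Ctx
  | hole, G => G
  | appR v F, G => appR v (F.comp G)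
  | appL F u, G => appL (F.comp G) u
  | reset F, G => reset (F.comp G)

end Ctx

/-- A canonical fresh variable not occurring in the finite set s. -/
def fresh (s : Finset ℕ) : ℕ := s.sup id + 1

/-- The reduction relation →v of λS. -/
inductive Red : Tm → Tm → Prop
  | beta (F : Ctx) (x : ℕ) (t v : Tm) :
      F.Wf → v.IsValue →
      Red (F.plug (Tm.app (Tm.lam x t) v)) (F.plug (t.subst x v))
  | shift (F E : Ctx) (k : ℕ) (t : Tm) :
      F.Wf → E.Wf → E.Pure →
      Red (F.plug (Tm.reset (E.plug (Tm.shift k t))))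
          (F.plug (Tm.reset (t.subst k
            (Tm.lam (fresh E.fv) (Tm.reset (E.plug (Tm.var (fresh E.fv))))))))
  | reset (F : Ctx) (v : Tm) :
      F.Wf → v.IsValue →
      Red (F.plug (Tm.reset v)) (F.plug v)

/-- A term is stuck if it is not a value and admits no reduction step. -/
def Stuck (t : Tm) : Prop := ¬ t.IsValue ∧ ∀ t', ¬ Red t t'

/-- A normal form is a value or a stuck term. -/
def NormalForm (t : Tm) : Prop := t.IsValue ∨ Stuck t

/-- Reflexive-transitive closure of reduction. -/
def Steps : Tm → Tm → Prop := Relation.ReflTransGen Red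

/-- Evaluation: t ⇓ t' when t →v* t' and t' is irreducible. -/
def Evals (t t' : Tm) : Prop := Steps t t' ∧ ∀ u, ¬ Red t' u

/-- Redexes: (λx.t) v, ⟨E[Sk.t]⟩ with E pure, and ⟨v⟩. -/
def IsRedex (r : Tm) : Prop :=
  (∃ x t v, Tm.IsValue v ∧ r = Tm.app (Tm.lam x t) v) ∨
  (∃ E : Ctx, ∃ k t, E.Wf ∧ E.Pure ∧ r = Tm.reset (E.plug (Tm.shift k t))) ∨
  (∃ v, Tm.IsValue v ∧ r = Tm.reset v)

/-- Divergence: an infinite reduction sequence. -/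
def Diverges (t : Tm) : Prop := ∃ f : ℕ → Tm, f 0 = t ∧ ∀ n, Red (f n) (f (n + 1))

/-- Ω = (λx.x x)(λx.x x). -/
def Omega : Tm :=
  Tm.app (Tm.lam 0 (Tm.app (Tm.var 0) (Tm.var 0)))
         (Tm.lam 0 (Tm.app (Tm.var 0) (Tm.var 0)))

/-- Arbitrary one-hole contexts C. -/
inductive GCtx : Type
  | hole : GCtx
  | lam : ℕ → GCtx → GCtx
  | appL : GCtx → Tm → GCtx
  | appR : Tm → GCtx → GCtx
  | shift : ℕ → GCtx → GCtx
  | reset : GCtx → GCtx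

def GCtx.plug : GCtx → Tm → Tm
  | hole, t => t
  | lam x C, t => Tm.lam x (C.plug t)
  | appL C u, t => Tm.app (C.plug t) u
  | appR u C, t => Tm.app u (C.plug t)
  | shift k C, t => Tm.shift k (C.plug t)
  | reset C, t => Tm.reset (C.plug t)

/-- Contextual equivalence for the relaxed semantics. -/
def CtxEquiv (t0 t1 : Tm) : Prop :=
  ∀ C : GCtx, (C.plug t0).Closed → (C.plug t1).Closed →
    ((∃ v, v.IsValue ∧ Evals (C.plug t0) v) ↔ (∃ v, v.IsValue ∧ Evals (C.plug t1) v)) ∧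
    ((∃ s, Stuck s ∧ Evals (C.plug t0) s) ↔ (∃ s, Stuck s ∧ Evals (C.plug t1) s))

/-- Contextual equivalence for the original (top-level reset) semantics. -/
def CtxEquivP (t0 t1 : Tm) : Prop :=
  ∀ C : GCtx, (Tm.reset (C.plug t0)).Closed → (Tm.reset (C.plug t1)).Closed →
    ((∃ v, v.IsValue ∧ Evals (Tm.reset (C.plug t0)) v) ↔
     (∃ v, v.IsValue ∧ Evals (Tm.reset (C.plug t1)) v))

/-- The term-generating closure of a relation R on closed terms. -/
inductive TmClo (R : Tm → Tm → Prop) : Tm → Tm → Prop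
  | base {t t'} : R t t' → TmClo R t t'
  | var (x : ℕ) : TmClo R (Tm.var x) (Tm.var x)
  | lam {t t'} (x : ℕ) : TmClo R t t' → TmClo R (Tm.lam x t) (Tm.lam x t')
  | app {a a' b b'} : TmClo R a a' → TmClo R b b' →
      TmClo R (Tm.app a b) (Tm.app a' b')
  | shift {t t'} (k : ℕ) : TmClo R t t' → TmClo R (Tm.shift k t) (Tm.shift k t')
  | reset {t t'} : TmClo R t t' → TmClo R (Tm.reset t) (Tm.reset t')

/-! The term-generating closure of the pair (Ω, Sk.Ω) is a simulation up to divergence. A step on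
the Ω side is matched by at most one step on the Sk.Ω side: the step Ω → Ω itself is matched by
standing still. Conversely, every step on the Sk.Ω side is matched by a step on the Ω side, except
the capture ⟨E[Sk.Ω]⟩ → ⟨Ω⟩, after which the program has the form F[Ω]. By unique decomposition,
the only step out of F[Ω] leads back to F[Ω], so such a program never reaches a value. -/

namespace Ctx

theorem eq_hole_of_plug_isValue {F : Ctx} {t : Tm} (h : (F.plug t).IsValue) :
    F = hole ∧ t.IsValue := by
  cases F <;> simp_all [plug, Tm.IsValue]

theorem eq_hole_of_plug_eq_shift {F : Ctx} {t u : Tm} {k : ℕ} (h : F.plug t = .shift k u) :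
    F = hole := by
  cases F <;> simp_all [plug]

theorem comp_plug (F G : Ctx) (t : Tm) : (F.comp G).plug t = F.plug (G.plug t) := by
  induction F <;> simp_all [comp, plug]

theorem Wf.of_comp {F G : Ctx} (h : (F.comp G).Wf) : G.Wf := by
  induction F <;> simp_all [comp, Wf]

theorem Wf.comp {F G : Ctx} (hF : F.Wf) (hG : G.Wf) : (F.comp G).Wf := by
  induction F <;> simp_all [Ctx.comp, Wf]

/-- Unique decomposition: the two holes of equal plugged terms are nested. -/
theorem plug_eq_plug {F G : Ctx} {a b : Tm} (hF : F.Wf) (hG : G.Wf) (ha : ¬ a.IsValue)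
    (hb : ¬ b.IsValue) (h : F.plug a = G.plug b) :
    (∃ H, G = F.comp H ∧ a = H.plug b) ∨ (∃ H, F = G.comp H ∧ b = H.plug a) := by
  induction F generalizing G with
  | hole => exact .inl ⟨G, rfl, h⟩
  | appR v F ih =>
    cases G with
    | hole => exact .inr ⟨appR v F, rfl, h.symm⟩
    | appR w G =>
      obtain ⟨rfl, hplug⟩ := Tm.app.inj h
      rcases ih (G := G) hF.2 hG.2 hplug with ⟨H, rfl, rfl⟩ | ⟨H, rfl, rfl⟩
      exacts [.inl ⟨H, rfl, rfl⟩, .inr ⟨H, rfl, rfl⟩]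
    | appL G u =>
      obtain ⟨rfl, -⟩ := Tm.app.inj h
      exact absurd (eq_hole_of_plug_isValue hF.1).2 hb
    | reset G => cases h
  | appL F u ih =>
    cases G with
    | hole => exact .inr ⟨appL F u, rfl, h.symm⟩
    | appR w G =>
      obtain ⟨hplug, -⟩ := Tm.app.inj h
      exact absurd (eq_hole_of_plug_isValue (hplug ▸ hG.1)).2 ha
    | appL G u' =>
      obtain ⟨hplug, rfl⟩ := Tm.app.inj h
      rcases ih (G := G) hF hG hplug with ⟨H, rfl, rfl⟩ | ⟨H, rfl, rfl⟩
      exacts [.inl ⟨H, rfl, rfl⟩, .inr ⟨H, rfl, rfl⟩]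
    | reset G => cases h
  | reset F ih =>
    cases G with
    | hole => exact .inr ⟨reset F, rfl, h.symm⟩
    | reset G =>
      rcases ih (G := G) hF hG (Tm.reset.inj h) with ⟨H, rfl, rfl⟩ | ⟨H, rfl, rfl⟩
      exacts [.inl ⟨H, rfl, rfl⟩, .inr ⟨H, rfl, rfl⟩]
    | appR | appL => cases h

end Ctx

inductive HeadRed : Tm → Tm → Prop
  | beta (x : ℕ) (t v : Tm) : v.IsValue → HeadRed (.app (.lam x t) v) (t.subst x v)
  | shift (E : Ctx) (k : ℕ) (t : Tm) : E.Wf → E.Pure →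
      HeadRed (.reset (E.plug (.shift k t)))
        (.reset (t.subst k (.lam (fresh E.fv) (.reset (E.plug (.var (fresh E.fv)))))))
  | reset (v : Tm) : v.IsValue → HeadRed (.reset v) v

theorem HeadRed.not_isValue {r r' : Tm} (h : HeadRed r r') : ¬ r.IsValue := by
  cases h <;> simp [Tm.IsValue]

theorem HeadRed.red {F : Ctx} {r r' : Tm} (hF : F.Wf) (h : HeadRed r r') :
    Red (F.plug r) (F.plug r') := by
  cases h with
  | beta x t v hv => exact .beta F x t v hF hv
  | shift E k t hE hP => exact .shift F E k t hF hE hP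
  | reset _ hv => exact .reset F _ hF hv

theorem red_iff_headRed {p q : Tm} :
    Red p q ↔ ∃ (F : Ctx) (r r' : Tm), F.Wf ∧ HeadRed r r' ∧ p = F.plug r ∧ q = F.plug r' := by
  constructor
  · rintro (⟨F, x, t, v, hF, hv⟩ | ⟨F, E, k, t, hF, hE, hP⟩ | ⟨F, v, hF, hv⟩)
    exacts [⟨F, _, _, hF, .beta x t v hv, rfl, rfl⟩, ⟨F, _, _, hF, .shift E k t hE hP, rfl, rfl⟩,
      ⟨F, _, _, hF, .reset v hv, rfl, rfl⟩]
  · rintro ⟨F, r, r', hF, h, rfl, rfl⟩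
    exact h.red hF

theorem not_red_of_isValue {v : Tm} (hv : v.IsValue) (q : Tm) : ¬ Red v q := by
  intro h
  obtain ⟨F, r, r', -, hr, rfl, -⟩ := red_iff_headRed.mp h
  exact hr.not_isValue (Ctx.eq_hole_of_plug_isValue hv).2

theorem Evals.of_steps_isValue {p v : Tm} (hs : Steps p v) (hv : v.IsValue) : Evals p v :=
  ⟨hs, not_red_of_isValue hv⟩

section Omega

open Ctx

theorem omega_not_isValue : ¬ Omega.IsValue := by
  simp [Omega, Tm.IsValue]

theorem omega_fv : Omega.fv = ∅ := by
  simp [Omega, Tm.fv]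

theorem omega_subst (x : ℕ) (v : Tm) : Omega.subst x v = Omega := by
  by_cases hx : 0 = x <;> simp [Omega, Tm.subst, hx]

theorem headRed_omega {r : Tm} (h : HeadRed Omega r) : r = Omega := by
  cases h
  rfl

theorem plug_eq_omega {F : Ctx} {t : Tm} (ht : ¬ t.IsValue) (h : F.plug t = Omega) :
    F = hole ∧ t = Omega := by
  cases F with
  | hole => exact ⟨rfl, h⟩
  | appR v F =>
    have hv : (F.plug t).IsValue := by rw [(Tm.app.inj h).2]; trivial
    exact absurd (eq_hole_of_plug_isValue hv).2 ht
  | appL F u =>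
    have hv : (F.plug t).IsValue := by rw [(Tm.app.inj h).1]; trivial
    exact absurd (eq_hole_of_plug_isValue hv).2 ht
  | reset F => cases h

theorem plug_omega_not_isValue {F : Ctx} : ¬ (F.plug Omega).IsValue :=
  fun h => omega_not_isValue (eq_hole_of_plug_isValue h).2

theorem eq_hole_of_headRed_plug_omega {H : Ctx} {r : Tm} (hH : H.Wf)
    (h : HeadRed (H.plug Omega) r) : H = hole := by
  generalize hp : H.plug Omega = p at h
  cases h with
  | beta x t v hv =>
    cases H with
    | hole => rfl
    | appR w H => exact absurd ((Tm.app.inj hp).2 ▸ hv) plug_omega_not_isValue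
    | appL H u =>
      have hv : (H.plug Omega).IsValue := by rw [(Tm.app.inj hp).1]; trivial
      exact absurd hv plug_omega_not_isValue
    | reset H => cases hp
  | shift E k t hE hP =>
    cases H with
    | reset H =>
      simp only [plug, Tm.reset.injEq] at hp
      rcases plug_eq_plug (F := H) hH hE omega_not_isValue (by simp [Tm.IsValue]) hp
        with ⟨K, -, hK⟩ | ⟨K, -, hK⟩
      · cases (plug_eq_omega (by simp [Tm.IsValue]) hK.symm).2
      · cases eq_hole_of_plug_eq_shift hK.symm
        cases hK
    | _ => cases hp
  | reset v hv =>
    cases H with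
    | reset H =>
      simp only [plug, Tm.reset.injEq] at hp
      exact absurd (hp ▸ hv) plug_omega_not_isValue
    | _ => cases hp

theorem red_plug_omega {F : Ctx} {q : Tm} (hF : F.Wf) (h : Red (F.plug Omega) q) :
    q = F.plug Omega := by
  obtain ⟨G, r, r', hG, hr, hp, rfl⟩ := red_iff_headRed.mp h
  rcases plug_eq_plug hF hG omega_not_isValue hr.not_isValue hp with ⟨H, rfl, hH⟩ | ⟨H, rfl, rfl⟩
  · obtain ⟨rfl, rfl⟩ := plug_eq_omega hr.not_isValue hH.symm
    rw [comp_plug, headRed_omega hr]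
    rfl
  · cases eq_hole_of_headRed_plug_omega hF.of_comp hr
    rw [comp_plug, headRed_omega hr]
    rfl

theorem steps_plug_omega {F : Ctx} {q : Tm} (hF : F.Wf) (h : Steps (F.plug Omega) q) :
    q = F.plug Omega := by
  induction h with
  | refl => rfl
  | tail _ hr ih => exact red_plug_omega hF (ih ▸ hr)

theorem not_steps_plug_omega_isValue {F : Ctx} {v : Tm} (hF : F.Wf)
    (h : Steps (F.plug Omega) v) : ¬ v.IsValue :=
  steps_plug_omega hF h ▸ plug_omega_not_isValue

end Omega

namespace TmClo

variable {R : Tm → Tm → Prop}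

theorem refl (t : Tm) : TmClo R t t := by
  induction t with
  | var x => exact .var x
  | lam x t ih => exact .lam x ih
  | app a b iha ihb => exact .app iha ihb
  | shift k t ih => exact .shift k ih
  | reset t ih => exact .reset ih

theorem gctx_plug {t t' : Tm} (h : TmClo R t t') (C : GCtx) :
    TmClo R (C.plug t) (C.plug t') := by
  induction C with
  | hole => exact h
  | lam x C ih => exact .lam x ih
  | appL C u ih => exact .app ih (refl u)
  | appR u C ih => exact .app (refl u) ih
  | shift k C ih => exact .shift k ih
  | reset C ih => exact .reset ih

theorem isValue_iff (hR : ∀ a b, R a b → ¬ a.IsValue ∧ ¬ b.IsValue) {v v' : Tm}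
    (h : TmClo R v v') : v.IsValue ↔ v'.IsValue := by
  cases h with
  | base hb => simp [hR _ _ hb]
  | _ => simp [Tm.IsValue]

theorem fv_eq (hR : ∀ a b, R a b → a.fv = b.fv) {t t' : Tm} (h : TmClo R t t') :
    t.fv = t'.fv := by
  induction h with
  | base hb => exact hR _ _ hb
  | var => rfl
  | _ => simp_all [Tm.fv]

theorem subst (hR : ∀ a b, R a b → ∀ x v v', R (a.subst x v) (b.subst x v')) {t t' v v' : Tm}
    (x : ℕ) (ht : TmClo R t t') (hv : TmClo R v v') : TmClo R (t.subst x v) (t'.subst x v') := by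
  induction ht with
  | base hb => exact .base (hR _ _ hb x v v')
  | var y =>
    simp only [Tm.subst]
    split
    exacts [hv, .var y]
  | lam y ht ih =>
    simp only [Tm.subst]
    split
    exacts [.lam y ht, .lam y ih]
  | app _ _ iha ihb => exact .app iha ihb
  | shift k ht ih =>
    simp only [Tm.subst]
    split
    exacts [.shift k ht, .shift k ih]
  | reset _ ih => exact .reset ih

end TmClo

inductive CtxRel (R : Tm → Tm → Prop) : Ctx → Ctx → Prop
  | hole : CtxRel R .hole .hole
  | appR {v v' : Tm} {F F' : Ctx} : TmClo R v v' → CtxRel R F F' →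
      CtxRel R (.appR v F) (.appR v' F')
  | appL {F F' : Ctx} {u u' : Tm} : CtxRel R F F' → TmClo R u u' →
      CtxRel R (.appL F u) (.appL F' u')
  | reset {F F' : Ctx} : CtxRel R F F' → CtxRel R (.reset F) (.reset F')

namespace CtxRel

variable {R : Tm → Tm → Prop}

theorem refl (F : Ctx) : CtxRel R F F := by
  induction F with
  | hole => exact .hole
  | appR v F ih => exact .appR (TmClo.refl v) ih
  | appL F u ih => exact .appL ih (TmClo.refl u)
  | reset F ih => exact .reset ih

theorem plug {F F' : Ctx} {t t' : Tm} (hF : CtxRel R F F') (ht : TmClo R t t') :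
    TmClo R (F.plug t) (F'.plug t') := by
  induction hF with
  | hole => exact ht
  | appR hv _ ih => exact .app hv ih
  | appL _ hu ih => exact .app ih hu
  | reset _ ih => exact .reset ih

theorem wf_iff (hR : ∀ a b, R a b → ¬ a.IsValue ∧ ¬ b.IsValue) {F F' : Ctx}
    (h : CtxRel R F F') : F.Wf ↔ F'.Wf := by
  induction h with
  | hole => rfl
  | appR hv _ ih => simp only [Ctx.Wf, TmClo.isValue_iff hR hv, ih]
  | appL _ _ ih | reset _ ih => exact ih

theorem pure_iff {F F' : Ctx} (h : CtxRel R F F') : F.Pure ↔ F'.Pure := by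
  induction h with
  | hole | reset => rfl
  | appR _ _ ih | appL _ _ ih => exact ih

theorem fv_eq (hR : ∀ a b, R a b → a.fv = b.fv) {F F' : Ctx} (h : CtxRel R F F') :
    F.fv = F'.fv := by
  induction h with
  | hole => rfl
  | appR hv _ ih => simp only [Ctx.fv, TmClo.fv_eq hR hv, ih]
  | appL _ hu ih => simp only [Ctx.fv, TmClo.fv_eq hR hu, ih]
  | reset _ ih => exact ih

end CtxRel

def OmegaShift (k : ℕ) (a b : Tm) : Prop := a = Omega ∧ b = .shift k Omega

namespace OmegaShift

variable {k : ℕ}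

theorem not_isValue (a b : Tm) (h : OmegaShift k a b) : ¬ a.IsValue ∧ ¬ b.IsValue := by
  obtain ⟨rfl, rfl⟩ := h
  exact ⟨omega_not_isValue, by simp [Tm.IsValue]⟩

theorem fv_eq (a b : Tm) (h : OmegaShift k a b) : a.fv = b.fv := by
  obtain ⟨rfl, rfl⟩ := h
  simp [Tm.fv, omega_fv]

theorem subst (a b : Tm) (h : OmegaShift k a b) (x : ℕ) (v v' : Tm) :
    OmegaShift k (a.subst x v) (b.subst x v') := by
  obtain ⟨rfl, rfl⟩ := h
  refine ⟨omega_subst x v, ?_⟩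
  by_cases hk : k = x <;> simp [Tm.subst, hk, omega_subst]

theorem decomp_left {G : Ctx} {s p' : Tm} (hs : ¬ s.IsValue)
    (h : TmClo (OmegaShift k) (G.plug s) p') :
    ∃ G' s', CtxRel (OmegaShift k) G G' ∧ p' = G'.plug s' ∧ TmClo (OmegaShift k) s s' := by
  induction G generalizing p' with
  | hole => exact ⟨.hole, p', .hole, rfl, h⟩
  | appR v G ih =>
    cases h with
    | base hb => nomatch (plug_eq_omega (F := .appR v G) hs hb.1).1
    | app hv hG =>
      obtain ⟨G', s', hc, rfl, hs'⟩ := ih hG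
      exact ⟨.appR _ G', s', .appR hv hc, rfl, hs'⟩
  | appL G u ih =>
    cases h with
    | base hb => nomatch (plug_eq_omega (F := .appL G u) hs hb.1).1
    | app hG hu =>
      obtain ⟨G', s', hc, rfl, hs'⟩ := ih hG
      exact ⟨.appL G' _, s', .appL hc hu, rfl, hs'⟩
  | reset G ih =>
    cases h with
    | base hb => cases hb.1
    | reset hG =>
      obtain ⟨G', s', hc, rfl, hs'⟩ := ih hG
      exact ⟨.reset G', s', .reset hc, rfl, hs'⟩

theorem decomp_right {G' : Ctx} {s' p : Tm} (h : TmClo (OmegaShift k) p (G'.plug s')) :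
    ∃ G s, CtxRel (OmegaShift k) G G' ∧ p = G.plug s ∧ TmClo (OmegaShift k) s s' := by
  induction G' generalizing p with
  | hole => exact ⟨.hole, p, .hole, rfl, h⟩
  | appR v G' ih =>
    cases h with
    | base hb => cases hb.2
    | app hv hG =>
      obtain ⟨G, s, hc, rfl, hs⟩ := ih hG
      exact ⟨.appR _ G, s, .appR hv hc, rfl, hs⟩
  | appL G' u ih =>
    cases h with
    | base hb => cases hb.2
    | app hG hu =>
      obtain ⟨G, s, hc, rfl, hs⟩ := ih hG
      exact ⟨.appL G _, s, .appL hc hu, rfl, hs⟩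
  | reset G' ih =>
    cases h with
    | base hb => cases hb.2
    | reset hG =>
      obtain ⟨G, s, hc, rfl, hs⟩ := ih hG
      exact ⟨.reset G, s, .reset hc, rfl, hs⟩

theorem headRed_left {r r' s : Tm} (h : TmClo (OmegaShift k) r r') (hr : HeadRed r s) :
    ∃ s', Relation.ReflGen HeadRed r' s' ∧ TmClo (OmegaShift k) s s' := by
  cases hr with
  | beta x t v hv =>
    cases h with
    | base hb =>
      obtain ⟨hΩ, rfl⟩ := hb
      have hs : t.subst x v = Omega := headRed_omega (by rw [← hΩ]; exact .beta x t v hv)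
      rw [hs]
      exact ⟨_, .refl, .base ⟨rfl, rfl⟩⟩
    | app hf hv' =>
      cases hf with
      | base hb => cases hb.1
      | lam _ ht =>
        exact ⟨_, .single (.beta x _ _ ((TmClo.isValue_iff not_isValue hv').mp hv)),
          TmClo.subst subst x ht hv'⟩
  | shift E k' t hE hP =>
    cases h with
    | base hb => cases hb.1
    | reset hm =>
      obtain ⟨E', u', hE', rfl, hu⟩ := decomp_left (by simp [Tm.IsValue]) hm
      cases hu with
      | base hb => cases hb.1
      | shift _ ht =>
        refine ⟨_, .single (.shift E' k' _ ((hE'.wf_iff not_isValue).mp hE) (hE'.pure_iff.mp hP)),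
          .reset (TmClo.subst subst k' ht ?_)⟩
        rw [← hE'.fv_eq fv_eq]
        exact .lam _ (.reset (hE'.plug (.var _)))
  | reset v hv =>
    cases h with
    | base hb => cases hb.1
    | reset hv' => exact ⟨_, .single (.reset _ ((TmClo.isValue_iff not_isValue hv').mp hv)), hv'⟩

theorem headRed_right {r r' s' : Tm} (h : TmClo (OmegaShift k) r r') (hr : HeadRed r' s') :
    (∃ s, HeadRed r s ∧ TmClo (OmegaShift k) s s') ∨ s' = .reset Omega := by
  cases hr with
  | beta x t' v' hv' =>
    cases h with
    | base hb => cases hb.2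
    | app hf hv =>
      cases hf with
      | base hb => cases hb.2
      | lam _ ht =>
        exact .inl ⟨_, .beta x _ _ ((TmClo.isValue_iff not_isValue hv).mpr hv'),
          TmClo.subst subst x ht hv⟩
  | shift E' k' t' hE' hP' =>
    cases h with
    | base hb => cases hb.2
    | reset hm =>
      obtain ⟨E, u, hE, rfl, hu⟩ := decomp_right hm
      cases hu with
      | base hb =>
        obtain ⟨-, hb⟩ := hb
        cases hb
        exact .inr (by rw [omega_subst])
      | shift _ ht =>
        refine .inl ⟨_, .shift E k' _ ((hE.wf_iff not_isValue).mpr hE') (hE.pure_iff.mpr hP'),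
          .reset (TmClo.subst subst k' ht ?_)⟩
        rw [hE.fv_eq fv_eq]
        exact .lam _ (.reset (hE.plug (.var _)))
  | reset v' hv' =>
    cases h with
    | base hb => cases hb.2
    | reset hv => exact .inl ⟨_, .reset _ ((TmClo.isValue_iff not_isValue hv).mpr hv'), hv⟩

theorem red_left {p p' q : Tm} (h : TmClo (OmegaShift k) p p') (hr : Red p q) :
    ∃ q', Steps p' q' ∧ TmClo (OmegaShift k) q q' := by
  obtain ⟨G, r, s, hG, hrs, rfl, rfl⟩ := red_iff_headRed.mp hr
  obtain ⟨G', r', hGG', rfl, hrr'⟩ := decomp_left hrs.not_isValue h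
  obtain ⟨s', hs', hss'⟩ := headRed_left hrr' hrs
  refine ⟨G'.plug s', ?_, hGG'.plug hss'⟩
  cases hs' with
  | refl => exact .refl
  | single hs' => exact .single (hs'.red ((hGG'.wf_iff not_isValue).mp hG))

theorem red_right {p p' q' : Tm} (h : TmClo (OmegaShift k) p p') (hr : Red p' q') :
    (∃ q, Red p q ∧ TmClo (OmegaShift k) q q') ∨ ∃ F : Ctx, F.Wf ∧ q' = F.plug Omega := by
  obtain ⟨G', r', s', hG', hrs, rfl, rfl⟩ := red_iff_headRed.mp hr
  obtain ⟨G, r, hGG', rfl, hrr'⟩ := decomp_right h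
  rcases headRed_right hrr' hrs with ⟨s, hs, hss'⟩ | rfl
  · exact .inl ⟨_, hs.red ((hGG'.wf_iff not_isValue).mpr hG'), hGG'.plug hss'⟩
  · exact .inr ⟨G'.comp (.reset .hole), hG'.comp trivial, (Ctx.comp_plug G' (.reset .hole) Omega).symm⟩

theorem steps_isValue_left {p p' w : Tm} (h : TmClo (OmegaShift k) p p') (hs : Steps p w)
    (hw : w.IsValue) : ∃ w', w'.IsValue ∧ Steps p' w' := by
  induction hs using Relation.ReflTransGen.head_induction_on generalizing p' with
  | refl => exact ⟨p', (TmClo.isValue_iff not_isValue h).mp hw, .refl⟩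
  | head hr _ ih =>
    obtain ⟨q', hq', hqq'⟩ := red_left h hr
    obtain ⟨w', hw', hs'⟩ := ih hqq'
    exact ⟨w', hw', hq'.trans hs'⟩

theorem steps_isValue_right {p p' w' : Tm} (h : TmClo (OmegaShift k) p p') (hs : Steps p' w')
    (hw : w'.IsValue) : ∃ w, w.IsValue ∧ Steps p w := by
  induction hs using Relation.ReflTransGen.head_induction_on generalizing p with
  | refl => exact ⟨p, (TmClo.isValue_iff not_isValue h).mpr hw, .refl⟩
  | head hr hs ih =>
    rcases red_right h hr with ⟨q, hq, hqq'⟩ | ⟨F, hF, rfl⟩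
    · obtain ⟨w, hw, hs⟩ := ih hqq'
      exact ⟨w, hw, .head hq hs⟩
    · exact absurd hw (not_steps_plug_omega_isValue hF hs)

theorem exists_isValue_evals_iff {p p' : Tm} (h : TmClo (OmegaShift k) p p') :
    (∃ v, v.IsValue ∧ Evals p v) ↔ (∃ v, v.IsValue ∧ Evals p' v) := by
  constructor
  · rintro ⟨w, hw, hs, -⟩
    obtain ⟨w', hw', hs'⟩ := steps_isValue_left h hs hw
    exact ⟨w', hw', .of_steps_isValue hs' hw'⟩
  · rintro ⟨w', hw', hs', -⟩
    obtain ⟨w, hw, hs⟩ := steps_isValue_right h hs' hw'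
    exact ⟨w, hw, .of_steps_isValue hs hw⟩

end OmegaShift

/-- under the top-level-reset semantics, Ω ≃_p Sk.Ω; moreover
    for any evaluation context F, neither ⟨F[Ω]⟩ nor ⟨F[Sk.Ω]⟩ evaluates to
    a value. -/
theorem omega_equivP_shift_omega (k : ℕ) :
    CtxEquivP Omega (Tm.shift k Omega) ∧
    (∀ F : Ctx, F.Wf →
      (¬ ∃ v, v.IsValue ∧ Evals (Tm.reset (F.plug Omega)) v) ∧
      (¬ ∃ v, v.IsValue ∧ Evals (Tm.reset (F.plug (Tm.shift k Omega))) v)) := by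
  have hbase : TmClo (OmegaShift k) Omega (.shift k Omega) := .base ⟨rfl, rfl⟩
  have hΩ : ∀ F : Ctx, F.Wf → ¬ ∃ v, v.IsValue ∧ Evals (.reset (F.plug Omega)) v :=
    fun F hF ⟨v, hv, hs, _⟩ => not_steps_plug_omega_isValue (F := .reset F) hF hs hv
  refine ⟨fun C _ _ => OmegaShift.exists_isValue_evals_iff (.reset (hbase.gctx_plug C)),
    fun F hF => ⟨hΩ F hF, ?_⟩⟩
  rw [← OmegaShift.exists_isValue_evals_iff (.reset ((CtxRel.refl F).plug hbase))]
  exact hΩ F hF
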